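/- arXiv:2411.03633 — 3 statements merged into one kernel-verified Lean document; each statement's English description precedes it below -/
import Mathlib

section
/- (Bounding convex hull by coordinate box) Let A be the convex hull of finitely many points x₁,...,xₙ ∈ ℝ^d, and let D = I₁ × I₂ × ··· × I_d be the box whose k-th factor is the interval [min_i x_{i,k}, max_i x_{i,k}]. Then A ⊆ D and the Hausdorff distance satisfies D_H(A, D) ≤ √(d/2) · μ(A), where μ(A) = max_{a,b∈A} ‖a-b‖₂ is the diameter of A. -/
/-!
Let `a` be the point of `A` nearest to a point `y` of the box and `v = y - a`, so that
`‖v‖² ≤ ⟪v, y - b⟫` for every `b ∈ A`. For each coordinate `k` pick a point `p k` of `A` with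
`v k * y k ≤ v k * p k k` (a maximiser or minimiser of the `k`-th coordinate, by the sign of
`v k`); then `‖v‖² ≤ ∑ₖ v k (p k k - p m k)` for every `m`. Weighting by `v m²`, summing and
symmetrising in `(k, m)` turns each pair into a `2 × 2` determinant, bounded by
`|v k v m| √(v k² + v m²) diam A`, which gives `2‖v‖⁴ ≤ √(2d) ‖v‖³ diam A` by Cauchy–Schwarz.
-/

open Metric Finset

theorem abs_mul_sub_mul_le_sqrt_mul_sqrt (a b c d : ℝ) :
    |a * d - b * c| ≤ √(a ^ 2 + b ^ 2) * √(c ^ 2 + d ^ 2) := by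
  rw [← Real.sqrt_mul (by positivity), ← Real.sqrt_sq_eq_abs]
  exact Real.sqrt_le_sqrt (by nlinarith [sq_nonneg (a * c + b * d)])

theorem Finset.exists_mul_le_mul_of_mem_Icc_inf'_sup' {α : Type*} {s : Finset α}
    (hs : s.Nonempty) (f : α → ℝ) {t : ℝ} (ht : t ∈ Set.Icc (s.inf' hs f) (s.sup' hs f))
    (c : ℝ) : ∃ i ∈ s, c * t ≤ c * f i := by
  rcases le_total 0 c with hc | hc
  · obtain ⟨i, hi, hmax⟩ := exists_mem_eq_sup' hs f
    exact ⟨i, hi, hmax ▸ mul_le_mul_of_nonneg_left ht.2 hc⟩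
  · obtain ⟨i, hi, hmin⟩ := exists_mem_eq_inf' hs f
    exact ⟨i, hi, hmin ▸ mul_le_mul_of_nonpos_left ht.1 hc⟩

namespace EuclideanSpace

variable {ι : Type*} [Fintype ι]

theorem sqrt_sq_add_sq_le_norm (u : EuclideanSpace ℝ ι) {k m : ι} (hkm : k ≠ m) :
    √(u k ^ 2 + u m ^ 2) ≤ ‖u‖ := by
  classical
  rw [Real.sqrt_le_left (norm_nonneg u), real_norm_sq_eq, ← sum_pair (f := fun i => u i ^ 2) hkm]
  exact sum_le_sum_of_subset_of_nonneg (subset_univ _) fun j _ _ => sq_nonneg _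

theorem sum_sum_abs_mul_mul_sqrt_le (v : EuclideanSpace ℝ ι) :
    ∑ k, ∑ m, |v k * v m| * √(v k ^ 2 + v m ^ 2) ≤ √(2 * Fintype.card ι) * ‖v‖ ^ 3 := by
  have hprod : ∑ k, ∑ m, (v k * v m) ^ 2 = (‖v‖ ^ 2) ^ 2 := by
    simp_rw [mul_pow, ← mul_sum, ← sum_mul, real_norm_sq_eq]; ring
  have hsum : ∑ k, ∑ m, (v k ^ 2 + v m ^ 2) = 2 * Fintype.card ι * ‖v‖ ^ 2 := by
    simp only [sum_add_distrib, sum_const, card_univ, nsmul_eq_mul, ← mul_sum, real_norm_sq_eq]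
    ring
  calc ∑ k, ∑ m, |v k * v m| * √(v k ^ 2 + v m ^ 2)
      = ∑ km : ι × ι, √((v km.1 * v km.2) ^ 2) * √(v km.1 ^ 2 + v km.2 ^ 2) := by
        simp only [Real.sqrt_sq_eq_abs, Fintype.sum_prod_type]
    _ ≤ √(∑ km : ι × ι, (v km.1 * v km.2) ^ 2) * √(∑ km : ι × ι, (v km.1 ^ 2 + v km.2 ^ 2)) :=
        Real.sum_sqrt_mul_sqrt_le _ (fun _ => sq_nonneg _) fun _ => by positivity
    _ = √(2 * Fintype.card ι) * ‖v‖ ^ 3 := by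
        rw [Fintype.sum_prod_type, Fintype.sum_prod_type, hprod, hsum,
          Real.sqrt_sq (by positivity), Real.sqrt_mul (by positivity), Real.sqrt_sq (norm_nonneg v)]
        ring

theorem norm_le_sqrt_card_div_two_mul_of_le_sum {v : EuclideanSpace ℝ ι}
    {p : ι → EuclideanSpace ℝ ι} {δ : ℝ} (hp : ∀ k m, ‖p k - p m‖ ≤ δ)
    (hv : ∀ m, ‖v‖ ^ 2 ≤ ∑ k, v k * (p k k - p m k)) :
    ‖v‖ ≤ √(Fintype.card ι / 2) * δ := by
  rcases isEmpty_or_nonempty ι with hι | ⟨⟨k₀⟩⟩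
  · simp [Subsingleton.elim v 0]
  have hδ : 0 ≤ δ := (norm_nonneg _).trans (hp k₀ k₀)
  have hpair : ∀ k m, v k * v m * (v m * (p k - p m) k - v k * (p k - p m) m) ≤
      |v k * v m| * √(v k ^ 2 + v m ^ 2) * δ := by
    intro k m
    obtain rfl | hkm := eq_or_ne k m
    · rw [sub_self, mul_zero]
      positivity
    calc v k * v m * (v m * (p k - p m) k - v k * (p k - p m) m)
        ≤ |v k * v m| * |v m * (p k - p m) k - v k * (p k - p m) m| := by
          rw [← abs_mul]; exact le_abs_self _
      _ ≤ |v k * v m| * (√(v m ^ 2 + v k ^ 2) * √((p k - p m) m ^ 2 + (p k - p m) k ^ 2)) :=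
          mul_le_mul_of_nonneg_left (abs_mul_sub_mul_le_sqrt_mul_sqrt _ _ _ _) (abs_nonneg _)
      _ ≤ |v k * v m| * (√(v k ^ 2 + v m ^ 2) * δ) := by
          rw [add_comm (v m ^ 2)]
          gcongr
          exact (sqrt_sq_add_sq_le_norm _ hkm.symm).trans (hp k m)
      _ = |v k * v m| * √(v k ^ 2 + v m ^ 2) * δ := by ring
  have hquartic : ‖v‖ ^ 4 ≤ ∑ k, ∑ m, v m ^ 2 * (v k * (p k k - p m k)) :=
    calc ‖v‖ ^ 4 = ∑ m, v m ^ 2 * ‖v‖ ^ 2 := by rw [← sum_mul, ← real_norm_sq_eq]; ring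
      _ ≤ ∑ m, v m ^ 2 * ∑ k, v k * (p k k - p m k) :=
          sum_le_sum fun m _ => mul_le_mul_of_nonneg_left (hv m) (sq_nonneg _)
      _ = ∑ k, ∑ m, v m ^ 2 * (v k * (p k k - p m k)) := by simp_rw [mul_sum]; exact sum_comm
  have hsymm : 2 * ∑ k, ∑ m, v m ^ 2 * (v k * (p k k - p m k)) =
      ∑ k, ∑ m, v k * v m * (v m * (p k - p m) k - v k * (p k - p m) m) := by
    rw [two_mul]
    nth_rewrite 2 [sum_comm]
    rw [← sum_add_distrib]
    refine sum_congr rfl fun k _ => ?_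
    rw [← sum_add_distrib]
    refine sum_congr rfl fun m _ => ?_
    simp only [PiLp.sub_apply]
    ring
  have hcubic : 2 * ‖v‖ ^ 4 ≤ √(2 * Fintype.card ι) * ‖v‖ ^ 3 * δ :=
    calc 2 * ‖v‖ ^ 4 ≤ 2 * ∑ k, ∑ m, v m ^ 2 * (v k * (p k k - p m k)) := by gcongr
      _ = ∑ k, ∑ m, v k * v m * (v m * (p k - p m) k - v k * (p k - p m) m) := hsymm
      _ ≤ ∑ k, ∑ m, |v k * v m| * √(v k ^ 2 + v m ^ 2) * δ :=
          sum_le_sum fun k _ => sum_le_sum fun m _ => hpair k m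
      _ = (∑ k, ∑ m, |v k * v m| * √(v k ^ 2 + v m ^ 2)) * δ := by simp_rw [sum_mul]
      _ ≤ √(2 * Fintype.card ι) * ‖v‖ ^ 3 * δ := by gcongr; exact sum_sum_abs_mul_mul_sqrt_le v
  have hsqrt : √(2 * Fintype.card ι) = 2 * √(Fintype.card ι / 2) := by
    rw [show (2 : ℝ) * Fintype.card ι = 2 ^ 2 * (Fintype.card ι / 2) by ring,
      Real.sqrt_mul (by positivity), Real.sqrt_sq zero_le_two]
  rcases (norm_nonneg v).eq_or_lt with hv0 | hv0
  · rw [← hv0]; positivity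
  · refine le_of_mul_le_mul_right (a := ‖v‖ ^ 3) ?_ (by positivity)
    rw [hsqrt] at hcubic
    linarith

theorem exists_dist_le_sqrt_card_div_two_mul_diam {A : Set (EuclideanSpace ℝ ι)}
    (hAc : IsCompact A) (hAconv : Convex ℝ A) (hAne : A.Nonempty) {y : EuclideanSpace ℝ ι}
    (hy : ∀ k (c : ℝ), ∃ a ∈ A, c * y k ≤ c * a k) :
    ∃ a ∈ A, dist y a ≤ √(Fintype.card ι / 2) * diam A := by
  obtain ⟨a, haA, hproj⟩ := exists_norm_eq_iInf_of_complete_convex hAne hAc.isComplete hAconv y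
  rw [norm_eq_iInf_iff_real_inner_le_zero hAconv haA] at hproj
  refine ⟨a, haA, ?_⟩
  set v := y - a with hv
  choose p hpA hp using fun k => hy k (v k)
  rw [dist_eq_norm]
  refine norm_le_sqrt_card_div_two_mul_of_le_sum (p := p)
    (fun k m => dist_eq_norm (p k) (p m) ▸ dist_le_diam_of_mem hAc.isBounded (hpA k) (hpA m))
    fun m => ?_
  calc ‖v‖ ^ 2 ≤ ‖v‖ ^ 2 - inner ℝ v (p m - a) := by linarith [hproj _ (hpA m)]
    _ = inner ℝ v (y - p m) := by
        rw [show y - p m = v - (p m - a) by rw [hv]; abel, inner_sub_right v v,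
          real_inner_self_eq_norm_sq]
    _ = ∑ k, v k * (y k - p m k) := by simp [PiLp.inner_apply, mul_comm]
    _ ≤ ∑ k, v k * (p k k - p m k) := sum_le_sum fun k _ => by linarith [hp k]

end EuclideanSpace

theorem convexHull_box_hausdorff_bound_general
    (d n : ℕ)
    (hne : (Finset.univ : Finset (Fin n)).Nonempty)
    (x : Fin n → EuclideanSpace ℝ (Fin d))
    (A D : Set (EuclideanSpace ℝ (Fin d)))
    (hA : A = convexHull ℝ (Set.range x))
    (hD : D = {y | ∀ k : Fin d,
        y k ∈ Set.Icc (Finset.univ.inf' hne (fun i : Fin n => x i k))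
                      (Finset.univ.sup' hne (fun i : Fin n => x i k))}) :
    A ⊆ D ∧ hausdorffDist A D ≤ Real.sqrt ((d : ℝ) / 2) * diam A := by
  have hxA : ∀ i, x i ∈ A := fun i => hA ▸ subset_convexHull ℝ _ ⟨i, rfl⟩
  have hDconv : Convex ℝ D := by
    rw [hD, Set.ofPred_forall]
    exact convex_iInter fun k =>
      (convex_Icc _ _).linear_preimage (EuclideanSpace.proj k).toLinearMap
  have hAD : A ⊆ D := by
    rw [hA]
    refine convexHull_min ?_ hDconv
    rintro _ ⟨i, rfl⟩
    rw [hD]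
    exact fun k => ⟨inf'_le _ (mem_univ i), le_sup' (fun j => x j k) (mem_univ i)⟩
  have hDA : ∀ y ∈ D, ∃ a ∈ A, dist y a ≤ √((d : ℝ) / 2) * diam A := by
    intro y hy
    rw [hD] at hy
    simpa using EuclideanSpace.exists_dist_le_sqrt_card_div_two_mul_diam
      (hA ▸ (Set.finite_range x).isCompact_convexHull (𝕜 := ℝ)) (hA ▸ convex_convexHull ℝ _)
      ⟨_, hxA hne.choose⟩ fun k c =>
        let ⟨i, _, hi⟩ := exists_mul_le_mul_of_mem_Icc_inf'_sup' hne _ (hy k) c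
        ⟨x i, hxA i, hi⟩
  exact ⟨hAD, hausdorffDist_le_of_mem_dist (by positivity)
    (fun a ha => ⟨a, hAD ha, by simp only [dist_self]; positivity⟩) hDA⟩

/-- The convex hull of finitely many points is contained in its coordinate bounding box,
and the Hausdorff distance to the box is at most √(d/2) times the diameter. -/
theorem convexHull_box_hausdorff_bound
    (d n : ℕ) (hn : 0 < n)
    (hne : (Finset.univ : Finset (Fin n)).Nonempty)
    (x : Fin n → EuclideanSpace ℝ (Fin d))
    (A D : Set (EuclideanSpace ℝ (Fin d)))
    (hA : A = convexHull ℝ (Set.range x))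
    (hD : D = {y | ∀ k : Fin d,
        y k ∈ Set.Icc (Finset.univ.inf' hne (fun i : Fin n => x i k))
                      (Finset.univ.sup' hne (fun i : Fin n => x i k))}) :
    A ⊆ D ∧ hausdorffDist A D ≤ Real.sqrt ((d : ℝ) / 2) * diam A :=
  convexHull_box_hausdorff_bound_general d n hne x A D hA hD
end

section
/- (Mean square consensus from ergodicity) Suppose x̄(t+1) = M(t)x̄(t) + H(t)v(t) in ℝ^{n̄×d}, where the backward products Ψ_{t,s} = M(t-1)···M(s) converge as t → ∞ to matrices with identical rows (strong ergodicity holds uniformly), 0 ≤ H(t) ≤ M(t) entrywise, and v(t) are independent zero-mean noises with covariance λ²υ^{2t}I_d per row, 0 < υ < 1. Then for any two agents i, j, lim_{t→∞} E[‖x_i(t) - x_j(t)‖₂²] = 0. -/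
/-!
Unrolling the recursion gives `x(t) = Ψ_{t,0} x(0) + ∑_{s<t} Ψ_{t,s+1} H(s) v(s)`, so in each
coordinate `x_i(t) - x_j(t)` is a combination of `x(0)` and of the noises whose coefficients are
differences of two rows of `Ψ_{t,0}` and of `Ψ_{t,s+1} H(s)`. By Minkowski's inequality in
`L²(P)`, the root mean square of `x_i(t) - x_j(t)` is at most the sum of these coefficients
weighted by the root mean squares of `x(0)` and of `v(s)`, the latter being `|λ| υ^s`.
Ergodicity sends each coefficient to `0` as `t → ∞`, and since `Ψ_{t,s+1} H(s)` has entries in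
`[0, 1]`, the `s`-th noise term never exceeds `n |λ| υ^s`; Tannery's theorem then sends the
whole bound to `0`.
-/

open MeasureTheory ProbabilityTheory Filter Finset Matrix Topology

section SecondMoment

variable {Ω : Type*} [MeasurableSpace Ω] {P : Measure Ω}

lemma sqrt_integral_sq_eq_norm_toLp {f : Ω → ℝ} (hf : MemLp f 2 P) :
    √(∫ ω, f ω ^ 2 ∂P) = ‖hf.toLp f‖ := by
  rw [← Real.sqrt_sq (norm_nonneg (hf.toLp f)), ← real_inner_self_eq_norm_sq, L2.inner_def]
  congr 1
  refine integral_congr_ae ?_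
  filter_upwards [hf.coeFn_toLp] with ω hω
  simp [hω, sq]

lemma sqrt_integral_sq_add_le {f g : Ω → ℝ} (hf : MemLp f 2 P) (hg : MemLp g 2 P) :
    √(∫ ω, (f ω + g ω) ^ 2 ∂P) ≤ √(∫ ω, f ω ^ 2 ∂P) + √(∫ ω, g ω ^ 2 ∂P) := by
  rw [sqrt_integral_sq_eq_norm_toLp hf, sqrt_integral_sq_eq_norm_toLp hg]
  calc √(∫ ω, (f ω + g ω) ^ 2 ∂P) = ‖(hf.add hg).toLp (f + g)‖ :=
        sqrt_integral_sq_eq_norm_toLp (hf.add hg)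
    _ ≤ _ := by rw [MemLp.toLp_add]; exact norm_add_le _ _

lemma sqrt_integral_sq_sum_le {ι : Type*} (s : Finset ι) {f : ι → Ω → ℝ}
    (hf : ∀ m ∈ s, MemLp (f m) 2 P) :
    √(∫ ω, (∑ m ∈ s, f m ω) ^ 2 ∂P) ≤ ∑ m ∈ s, √(∫ ω, f m ω ^ 2 ∂P) := by
  induction s using Finset.cons_induction with
  | empty => simp
  | cons a s _ ih =>
    rw [forall_mem_cons] at hf
    simp only [sum_cons]
    calc √(∫ ω, (f a ω + ∑ m ∈ s, f m ω) ^ 2 ∂P)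
        ≤ √(∫ ω, f a ω ^ 2 ∂P) + √(∫ ω, (∑ m ∈ s, f m ω) ^ 2 ∂P) :=
          sqrt_integral_sq_add_le hf.1 (memLp_finsetSum s hf.2)
      _ ≤ _ := add_le_add_right (ih hf.2) _

lemma sqrt_integral_sq_const_mul (c : ℝ) (f : Ω → ℝ) :
    √(∫ ω, (c * f ω) ^ 2 ∂P) = |c| * √(∫ ω, f ω ^ 2 ∂P) := by
  simp_rw [mul_pow, integral_const_mul]
  rw [Real.sqrt_mul (sq_nonneg c), Real.sqrt_sq_eq_abs]

lemma sqrt_integral_sq_sum_mul_le {ι : Type*} (s : Finset ι) (c : ι → ℝ) {f : ι → Ω → ℝ}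
    (hf : ∀ m ∈ s, MemLp (f m) 2 P) :
    √(∫ ω, (∑ m ∈ s, c m * f m ω) ^ 2 ∂P) ≤ ∑ m ∈ s, |c m| * √(∫ ω, f m ω ^ 2 ∂P) := by
  simpa only [sqrt_integral_sq_const_mul] using
    sqrt_integral_sq_sum_le (f := fun m ω => c m * f m ω) s fun m hm => (hf m hm).const_mul _

end SecondMoment

lemma tendsto_sum_range_of_dominated {G : Type*} [NormedAddCommGroup G] [CompleteSpace G]
    {f : ℕ → ℕ → G} {g : ℕ → ℝ} (hg : Summable g) (hfg : ∀ t s, s < t → ‖f t s‖ ≤ g s)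
    (hf : ∀ s, Tendsto (f · s) atTop (𝓝 0)) :
    Tendsto (fun t => ∑ s ∈ range t, f t s) atTop (𝓝 0) := by
  have key := tendsto_tsum_of_dominated_convergence (f := fun t s => if s < t then f t s else 0)
    hg (fun s => (hf s).congr' ?_) (Eventually.of_forall fun t s => ?_)
  · rw [tsum_zero] at key
    refine key.congr fun t => ?_
    rw [tsum_eq_sum (s := range t) fun s hs => if_neg (by simpa using hs), sum_ite_of_true]
    exact fun s hs => mem_range.1 hs
  · filter_upwards [eventually_gt_atTop s] with t ht
    simp [ht]
  · split_ifs with h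
    · exact hfg t s h
    · simpa using (norm_nonneg _).trans (hfg (s + 1) s s.lt_succ_self)

lemma tendsto_mul_apply_sub_mul_apply {ι κ α : Type*} [Fintype ι] {l : Filter α}
    {A : α → Matrix ι ι ℝ} {ψ : ι → ℝ} (hA : ∀ i j, Tendsto (fun t => A t i j) l (𝓝 (ψ j)))
    (B : Matrix ι κ ℝ) (i j : ι) (q : κ) :
    Tendsto (fun t => (A t * B) i q - (A t * B) j q) l (𝓝 0) := by
  have hrow : ∀ p, Tendsto (fun t => (A t * B) p q) l (𝓝 (∑ r, ψ r * B r q)) := fun p =>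
    tendsto_finsetSum _ fun r _ => (hA p r).mul_const _
  simpa using (hrow i).sub (hrow j)

lemma abs_mul_apply_sub_mul_apply_le_one {ι κ : Type*} [Fintype ι] [DecidableEq ι]
    {A : Matrix ι ι ℝ} (hA : A ∈ rowStochastic ℝ ι) {B : Matrix ι κ ℝ}
    (hB : ∀ p q, 0 ≤ B p q ∧ B p q ≤ 1) (i j : ι) (q : κ) :
    |(A * B) i q - (A * B) j q| ≤ 1 := by
  have hAB : ∀ p, 0 ≤ (A * B) p q ∧ (A * B) p q ≤ 1 := fun p =>
    ⟨sum_nonneg fun r _ => mul_nonneg (nonneg_of_mem_rowStochastic hA) (hB r q).1,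
      calc ∑ r, A p r * B r q ≤ ∑ r, A p r :=
            sum_le_sum fun r _ =>
              mul_le_of_le_one_right (nonneg_of_mem_rowStochastic hA) (hB r q).2
        _ = 1 := sum_row_of_mem_rowStochastic hA p⟩
  exact abs_sub_le_of_nonneg_of_le (hAB i).1 (hAB i).2 (hAB j).1 (hAB j).2

lemma mulVec_apply_sub_mulVec_apply {ι κ R : Type*} [Fintype κ] [CommRing R]
    (A : Matrix ι κ R) (z : κ → R) (i j : ι) :
    (A *ᵥ z) i - (A *ᵥ z) j = ∑ q, (A i - A j) q * z q := by
  simp only [mulVec, dotProduct, Pi.sub_apply, sub_mul, sum_sub_distrib]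

structure IsBackwardProduct {ι R : Type*} [Fintype ι] [DecidableEq ι] [Semiring R]
    (M : ℕ → Matrix ι ι R) (Ψ : ℕ → ℕ → Matrix ι ι R) : Prop where
  self_eq_one : ∀ s, Ψ s s = 1
  succ_eq_mul : ∀ t s, Ψ (t + 1) s = M t * Ψ t s

namespace IsBackwardProduct

variable {ι R : Type*} [Fintype ι] [DecidableEq ι] {M : ℕ → Matrix ι ι R}
  {Ψ : ℕ → ℕ → Matrix ι ι R}

lemma mem_rowStochastic [Semiring R] [PartialOrder R] [IsOrderedRing R]
    (hΨ : IsBackwardProduct M Ψ) (hM : ∀ t, M t ∈ rowStochastic R ι) {s t : ℕ} (hst : s ≤ t) :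
    Ψ t s ∈ rowStochastic R ι := by
  induction t, hst using Nat.le_induction with
  | base => rw [hΨ.self_eq_one]; exact one_mem _
  | succ t _ ih => rw [hΨ.succ_eq_mul]; exact mul_mem (hM t) ih

lemma eq_mulVec_add_sum [Semiring R] (hΨ : IsBackwardProduct M Ψ) {y u : ℕ → ι → R}
    (hy : ∀ t, y (t + 1) = M t *ᵥ y t + u t) (t : ℕ) :
    y t = Ψ t 0 *ᵥ y 0 + ∑ s ∈ range t, Ψ t (s + 1) *ᵥ u s := by
  induction t with
  | zero => simp [hΨ.self_eq_one]
  | succ t ih =>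
    rw [hy, ih, mulVec_add, mulVec_sum, sum_range_succ, hΨ.succ_eq_mul, hΨ.self_eq_one,
      one_mulVec, mulVec_mulVec, add_assoc]
    simp only [hΨ.succ_eq_mul, mulVec_mulVec]

end IsBackwardProduct

/-- Bound on the root mean square of `y t i - y t j` for `y (t + 1) = M t *ᵥ y t + H t *ᵥ w t`,
where `C q` is the root mean square of `y 0 q` and `r s` bounds that of every `w s q`. -/
def disagreementBound {ι : Type*} [Fintype ι] (Ψ : ℕ → ℕ → Matrix ι ι ℝ) (H : ℕ → Matrix ι ι ℝ)
    (C : ι → ℝ) (r : ℕ → ℝ) (i j : ι) (t : ℕ) : ℝ :=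
  ∑ q, |(Ψ t 0 i - Ψ t 0 j) q| * C q
    + ∑ s ∈ range t, ∑ q, |((Ψ t (s + 1) * H s) i - (Ψ t (s + 1) * H s) j) q| * r s

namespace IsBackwardProduct

variable {Ω ι : Type*} [MeasurableSpace Ω] {P : Measure Ω} [Fintype ι] [DecidableEq ι]
  {M H : ℕ → Matrix ι ι ℝ} {Ψ : ℕ → ℕ → Matrix ι ι ℝ}

lemma sqrt_integral_sq_sub_le_disagreementBound (hΨ : IsBackwardProduct M Ψ)
    {y w : ℕ → Ω → ι → ℝ} (hy : ∀ t ω, y (t + 1) ω = M t *ᵥ y t ω + H t *ᵥ w t ω)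
    (hy0 : ∀ q, MemLp (fun ω => y 0 ω q) 2 P) (hw : ∀ s q, MemLp (fun ω => w s ω q) 2 P)
    {r : ℕ → ℝ} (hwr : ∀ s q, √(∫ ω, w s ω q ^ 2 ∂P) ≤ r s) (t : ℕ) (i j : ι) :
    √(∫ ω, (y t ω i - y t ω j) ^ 2 ∂P)
      ≤ disagreementBound Ψ H (fun q => √(∫ ω, y 0 ω q ^ 2 ∂P)) r i j t := by
  have hgap : ∀ ω, y t ω i - y t ω j = ∑ q, (Ψ t 0 i - Ψ t 0 j) q * y 0 ω q
      + ∑ s ∈ range t, ∑ q, ((Ψ t (s + 1) * H s) i - (Ψ t (s + 1) * H s) j) q * w s ω q := by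
    intro ω
    rw [hΨ.eq_mulVec_add_sum (y := (y · ω)) (fun t => hy t ω) t]
    simp only [Pi.add_apply, Finset.sum_apply, mulVec_mulVec, add_sub_add_comm,
      ← sum_sub_distrib, mulVec_apply_sub_mulVec_apply]
  simp_rw [hgap]
  unfold disagreementBound
  refine (sqrt_integral_sq_add_le (memLp_finsetSum _ fun q _ => (hy0 q).const_mul _)
    (memLp_finsetSum _ fun s _ => memLp_finsetSum _ fun q _ => (hw s q).const_mul _)).trans
    (add_le_add (sqrt_integral_sq_sum_mul_le _ _ fun q _ => hy0 q) ?_)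
  refine (sqrt_integral_sq_sum_le _ fun s _ =>
    memLp_finsetSum _ fun q _ => (hw s q).const_mul _).trans (sum_le_sum fun s _ => ?_)
  refine (sqrt_integral_sq_sum_mul_le _ _ fun q _ => hw s q).trans (sum_le_sum fun q _ => ?_)
  exact mul_le_mul_of_nonneg_left (hwr s q) (abs_nonneg _)

lemma tendsto_disagreementBound (hΨ : IsBackwardProduct M Ψ) (hM : ∀ t, M t ∈ rowStochastic ℝ ι)
    (hH : ∀ t p q, 0 ≤ H t p q ∧ H t p q ≤ 1)
    (herg : ∀ s, ∃ ψ : ι → ℝ, ∀ i j, Tendsto (fun t => Ψ t s i j) atTop (𝓝 (ψ j)))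
    (C : ι → ℝ) {r : ℕ → ℝ} (hr0 : ∀ s, 0 ≤ r s) (hr : Summable r) (i j : ι) :
    Tendsto (disagreementBound Ψ H C r i j) atTop (𝓝 0) := by
  have hgap : ∀ s (B : Matrix ι ι ℝ) q,
      Tendsto (fun t => |((Ψ t s * B) i - (Ψ t s * B) j) q|) atTop (𝓝 0) := fun s B q => by
    obtain ⟨ψ, hψ⟩ := herg s
    simpa using (tendsto_mul_apply_sub_mul_apply hψ B i j q).abs
  have hinit : Tendsto (fun t => ∑ q, |(Ψ t 0 i - Ψ t 0 j) q| * C q) atTop (𝓝 0) := by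
    simpa using tendsto_finsetSum univ fun q _ => (hgap 0 1 q).mul_const (C q)
  have hnoise := tendsto_sum_range_of_dominated (hr.mul_left (Fintype.card ι : ℝ))
    (f := fun t s => ∑ q, |((Ψ t (s + 1) * H s) i - (Ψ t (s + 1) * H s) j) q| * r s)
    (fun t s hst => ?_) (fun s => ?_)
  · unfold disagreementBound
    simpa using hinit.add hnoise
  · rw [Real.norm_of_nonneg (sum_nonneg fun q _ => mul_nonneg (abs_nonneg _) (hr0 s))]
    calc ∑ q, |((Ψ t (s + 1) * H s) i - (Ψ t (s + 1) * H s) j) q| * r s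
        ≤ ∑ _q : ι, r s := sum_le_sum fun q _ => mul_le_of_le_one_left (hr0 s)
          (abs_mul_apply_sub_mul_apply_le_one (hΨ.mem_rowStochastic hM hst) (hH s) i j q)
      _ = Fintype.card ι * r s := by simp
  · simpa using tendsto_finsetSum univ fun q _ => (hgap (s + 1) (H s) q).mul_const (r s)

theorem tendsto_integral_sq_sub (hΨ : IsBackwardProduct M Ψ)
    (hM : ∀ t, M t ∈ rowStochastic ℝ ι) (hH : ∀ t p q, 0 ≤ H t p q ∧ H t p q ≤ 1)
    (herg : ∀ s, ∃ ψ : ι → ℝ, ∀ i j, Tendsto (fun t => Ψ t s i j) atTop (𝓝 (ψ j)))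
    {y w : ℕ → Ω → ι → ℝ} (hy : ∀ t ω, y (t + 1) ω = M t *ᵥ y t ω + H t *ᵥ w t ω)
    (hy0 : ∀ q, MemLp (fun ω => y 0 ω q) 2 P) (hw : ∀ s q, MemLp (fun ω => w s ω q) 2 P)
    {r : ℕ → ℝ} (hr : Summable r) (hwr : ∀ s q, √(∫ ω, w s ω q ^ 2 ∂P) ≤ r s) (i j : ι) :
    Tendsto (fun t => ∫ ω, (y t ω i - y t ω j) ^ 2 ∂P) atTop (𝓝 0) := by
  have hr0 : ∀ s, 0 ≤ r s := fun s => (Real.sqrt_nonneg _).trans (hwr s i)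
  have hsqrt : Tendsto (fun t => √(∫ ω, (y t ω i - y t ω j) ^ 2 ∂P)) atTop (𝓝 0) :=
    squeeze_zero (fun t => Real.sqrt_nonneg _)
      (hΨ.sqrt_integral_sq_sub_le_disagreementBound hy hy0 hw hwr · i j)
      (hΨ.tendsto_disagreementBound hM hH herg _ hr0 hr i j)
  simpa [Real.sq_sqrt (integral_nonneg fun ω => sq_nonneg _)] using hsqrt.pow 2

end IsBackwardProduct

theorem mean_square_consensus_from_ergodicity_general
    {Ω : Type*} [MeasureSpace Ω] (P : Measure Ω) [IsProbabilityMeasure P]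
    (n d : ℕ)
    (M H : ℕ → Matrix (Fin n) (Fin n) ℝ)
    (hM_nonneg : ∀ t i j, 0 ≤ M t i j)
    (hM_rowsum : ∀ t i, ∑ j, M t i j = 1)
    (hH : ∀ t i j, 0 ≤ H t i j ∧ H t i j ≤ M t i j)
    (Ψ : ℕ → ℕ → Matrix (Fin n) (Fin n) ℝ)
    (hΨdiag : ∀ s, Ψ s s = 1)
    (hΨsucc : ∀ t s, Ψ (t + 1) s = M t * Ψ t s)
    (herg : ∀ s, ∃ ψ : Fin n → ℝ, ∀ i j,
      Tendsto (fun t => Ψ t s i j) atTop (nhds (ψ j)))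
    (lam υ : ℝ) (hυ0 : 0 < υ) (hυ1 : υ < 1)
    (x : ℕ → Ω → Fin n → Fin d → ℝ)
    (v : ℕ → Ω → Fin n → Fin d → ℝ)
    (hv_L2 : ∀ t i k, MemLp (fun ω => v t ω i k) 2 P)
    (hv_cov : ∀ t i k k', ∫ ω, v t ω i k * v t ω i k' ∂P
        = if k = k' then lam ^ 2 * υ ^ (2 * t) else 0)
    (hupd : ∀ t ω i k,
      x (t + 1) ω i k = ∑ j, M t i j * x t ω j k + ∑ j, H t i j * v t ω j k)
    (hx_L2 : ∀ t i k, MemLp (fun ω => x t ω i k) 2 P)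
    (i j : Fin n) :
    Tendsto (fun t => ∫ ω, ∑ k, (x t ω i k - x t ω j k) ^ 2 ∂P) atTop (nhds 0) := by
  have hM : ∀ t, M t ∈ rowStochastic ℝ (Fin n) := fun t =>
    mem_rowStochastic_iff_sum.2 ⟨hM_nonneg t, hM_rowsum t⟩
  have hH_le_one : ∀ t p q, 0 ≤ H t p q ∧ H t p q ≤ 1 := fun t p q =>
    ⟨(hH t p q).1, (hH t p q).2.trans (le_one_of_mem_rowStochastic (hM t))⟩
  have hv_rms : ∀ s q k, √(∫ ω, v s ω q k ^ 2 ∂P) = |lam| * υ ^ s := fun s q k => by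
    have hmoment : ∫ ω, v s ω q k ^ 2 ∂P = (lam * υ ^ s) ^ 2 := by
      simp only [sq, hv_cov s q k k, ↓reduceIte]
      ring
    rw [hmoment, Real.sqrt_sq_eq_abs, abs_mul, abs_of_pos (pow_pos hυ0 s)]
  have hcoord : ∀ k, Tendsto (fun t => ∫ ω, (x t ω i k - x t ω j k) ^ 2 ∂P) atTop (𝓝 0) :=
    fun k => IsBackwardProduct.tendsto_integral_sq_sub ⟨hΨdiag, hΨsucc⟩ hM hH_le_one herg
      (y := fun t ω p => x t ω p k) (w := fun t ω p => v t ω p k)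
      (fun t ω => funext fun p => by simp [hupd, mulVec, dotProduct])
      (fun q => hx_L2 0 q k) (fun s q => hv_L2 s q k)
      ((summable_geometric_of_lt_one hυ0.le hυ1).mul_left |lam|)
      (fun s q => (hv_rms s q k).le) i j
  have hsum := tendsto_finsetSum univ fun k _ => hcoord k
  rw [sum_const_zero] at hsum
  exact hsum.congr fun t => (integral_finsetSum _ fun k _ =>
    ((hx_L2 t i k).sub (hx_L2 t j k)).integrable_sq).symm

/-- Mean square consensus from strong ergodicity of the backward products. -/
theorem mean_square_consensus_from_ergodicity
    {Ω : Type*} [MeasureSpace Ω] (P : Measure Ω) [IsProbabilityMeasure P]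
    (n d : ℕ)
    (M H : ℕ → Matrix (Fin n) (Fin n) ℝ)
    (hM_nonneg : ∀ t i j, 0 ≤ M t i j)
    (hM_rowsum : ∀ t i, ∑ j, M t i j = 1)
    (hH : ∀ t i j, 0 ≤ H t i j ∧ H t i j ≤ M t i j)
    (Ψ : ℕ → ℕ → Matrix (Fin n) (Fin n) ℝ)
    (hΨdiag : ∀ s, Ψ s s = 1)
    (hΨsucc : ∀ t s, Ψ (t + 1) s = M t * Ψ t s)
    (herg : ∀ s, ∃ ψ : Fin n → ℝ, ∀ i j,
      Tendsto (fun t => Ψ t s i j) atTop (nhds (ψ j)))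
    (lam υ : ℝ) (hlam : 0 < lam) (hυ0 : 0 < υ) (hυ1 : υ < 1)
    (x : ℕ → Ω → Fin n → Fin d → ℝ)
    (v : ℕ → Ω → Fin n → Fin d → ℝ)
    (hv_meas : ∀ t, Measurable (v t))
    (hv_L2 : ∀ t i k, MemLp (fun ω => v t ω i k) 2 P)
    (hv_mean : ∀ t i k, ∫ ω, v t ω i k ∂P = 0)
    (hv_cov : ∀ t i k k', ∫ ω, v t ω i k * v t ω i k' ∂P
        = if k = k' then lam ^ 2 * υ ^ (2 * t) else 0)
    (hv_indep : iIndepFun v P)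
    (hupd : ∀ t ω i k,
      x (t + 1) ω i k = ∑ j, M t i j * x t ω j k + ∑ j, H t i j * v t ω j k)
    (hx_L2 : ∀ t i k, MemLp (fun ω => x t ω i k) 2 P)
    (i j : Fin n) :
    Tendsto (fun t => ∫ ω, ∑ k, (x t ω i k - x t ω j k) ^ 2 ∂P) atTop (nhds 0) :=
  mean_square_consensus_from_ergodicity_general P n d M H hM_nonneg hM_rowsum hH Ψ hΨdiag hΨsucc
    herg lam υ hυ0 hυ1 x v hv_L2 hv_cov hupd hx_L2 i j
end

section
/- (Privacy noise coupling preserves observations) Consider the update x_i(t+1) = γ_i(t)s_i(t) + (1-γ_i(t))x_i(t) with observations y_i(t) = x_i(t) + η_i(t), where s_i(t) depends only on the observations {y_j(t)}. Given two initial states with x_i'(0) = x_i(0) + δ_i, define η_i'(0) = η_i(0) - δ_i and η_i'(h) = η_i(h) - ∏_{t=0}^{h-1}(1-γ_i(t))·δ_i for h ≥ 1. Then for all h ≥ 0: x_i'(h) = x_i(h) + ∏_{t=0}^{h-1}(1-γ_i(t))·δ_i (with the empty product equal to 1 at h = 0) and y_i'(h) = y_i(h). -/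
/-- Coupling of noises between two executions makes the observation sequences identical,
while the states differ by a decaying multiple of the initial perturbation. -/
theorem privacy_noise_coupling_preserves_observations
    (n d : ℕ)
    (γ : ℕ → Fin n → ℝ) (hγ : ∀ t i, γ t i ∈ Set.Ioo (0 : ℝ) 1)
    (s : ℕ → (Fin n → EuclideanSpace ℝ (Fin d)) → Fin n → EuclideanSpace ℝ (Fin d))
    (δ : Fin n → EuclideanSpace ℝ (Fin d))
    (x x' y y' η η' : ℕ → Fin n → EuclideanSpace ℝ (Fin d))
    (hx'0 : ∀ i, x' 0 i = x 0 i + δ i)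
    (hy : ∀ h i, y h i = x h i + η h i)
    (hy' : ∀ h i, y' h i = x' h i + η' h i)
    (hη' : ∀ h i, η' h i = η h i - (∏ t ∈ Finset.range h, (1 - γ t i)) • δ i)
    (hupd : ∀ h i, x (h + 1) i = γ h i • s h (y h) i + (1 - γ h i) • x h i)
    (hupd' : ∀ h i, x' (h + 1) i = γ h i • s h (y' h) i + (1 - γ h i) • x' h i) :
    ∀ h i, x' h i = x h i + (∏ t ∈ Finset.range h, (1 - γ t i)) • δ i ∧
      y' h i = y h i := by
  have key : ∀ h, ∀ i, x' h i = x h i + (∏ t ∈ Finset.range h, (1 - γ t i)) • δ i := by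
    intro h
    induction h with
    | zero => intro i; simpa using hx'0 i
    | succ h ih =>
      have hyeq : y' h = y h := by
        funext i
        rw [hy', hy, ih i, hη']
        abel
      intro i
      rw [hupd', hupd, hyeq, ih i, Finset.prod_range_succ]
      rw [smul_add, smul_comm, mul_smul, add_assoc]
  intro h i
  refine ⟨key h i, ?_⟩
  rw [hy', hy, key h i, hη']
  abel
end
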